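/- Under the hypotheses of Lyapunov's theorem for E(t,x)ẋ = F(t,x) with globally quadratic Lyapunov function V, the function t ↦ V(t, x(t)) is non-increasing along every solution, and consequently ‖x(t)‖² ≤ (c₃/c₂)‖x(t₀)‖² for all t ≥ t₀. -/

import Mathlib

/-! Along a solution, the chain rule splits the derivative of `t ↦ V(t, x(t))` into
`∂ₜV + ∇ₓV · ẋ = ∂ₜV + (Eᵀz) · ẋ = ∂ₜV + z · (E ẋ) = ∂ₜV + z · F ≤ 0`, so `V` decreases along
the solution; sandwiching it between `c₂‖x‖²` and `c₃‖x‖²` gives the norm bound. -/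

open Matrix Set

theorem Matrix.transpose_mulVec_dotProduct {m n R : Type*} [Fintype m] [Fintype n]
    [CommSemiring R] (A : Matrix m n R) (w : m → R) (v : n → R) :
    (Aᵀ *ᵥ w) ⬝ᵥ v = w ⬝ᵥ (A *ᵥ v) := by
  rw [mulVec_transpose, dotProduct_mulVec]

theorem HasFDerivAt.hasDerivAt_comp_prodMk_of_partials {E G : Type*}
    [NormedAddCommGroup E] [NormedSpace ℝ E] [NormedAddCommGroup G] [NormedSpace ℝ G]
    {g : ℝ × E → G} {L : ℝ × E →L[ℝ] G} {γ : ℝ → E} {v : E} {t : ℝ} {a b : G}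
    (hg : HasFDerivAt g L (t, γ t)) (hγ : HasDerivAt γ v t)
    (ha : HasDerivAt (fun s => g (s, γ t)) a t)
    (hb : HasDerivAt (fun s : ℝ => g (t, γ t + s • v)) b 0) :
    HasDerivAt (fun s => g (s, γ s)) (a + b) t := by
  have htime : L (1, 0) = a :=
    (hg.comp_hasDerivAt t ((hasDerivAt_id t).prodMk (hasDerivAt_const t (γ t)))).unique ha
  have hline : HasDerivAt (fun s : ℝ => (t, γ t + s • v)) ((0 : ℝ), v) 0 := by
    refine (hasDerivAt_const 0 t).prodMk ?_
    simpa using ((hasDerivAt_id (0 : ℝ)).smul_const v).const_add (γ t)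
  have hspace : L (0, v) = b :=
    ((by simpa using hg : HasFDerivAt g L (t, γ t + (0 : ℝ) • v)).comp_hasDerivAt 0 hline).unique hb
  have hsplit : L (1, v) = L (1, 0) + L (0, v) := by
    rw [← map_add, Prod.mk_add_mk, add_zero, zero_add]
  rw [← htime, ← hspace, ← hsplit]
  exact hg.comp_hasDerivAt t ((hasDerivAt_id t).prodMk hγ)

theorem antitoneOn_of_hasDerivAt_nonpos {D : Set ℝ} (hD : Convex ℝ D) {f f' : ℝ → ℝ}
    (hf : ∀ t ∈ D, HasDerivAt f (f' t) t) (hf' : ∀ t ∈ D, f' t ≤ 0) : AntitoneOn f D :=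
  antitoneOn_of_hasDerivWithinAt_nonpos hD
    (fun t ht => (hf t ht).continuousAt.continuousWithinAt)
    (fun t ht => (hf t (interior_subset ht)).hasDerivWithinAt)
    (fun t ht => hf' t (interior_subset ht))

theorem stmt5_general {n : ℕ} (t₀ : ℝ) (ht₀ : 0 ≤ t₀)
    (E : ℝ → (Fin n → ℝ) → Matrix (Fin n) (Fin n) ℝ)
    (F : ℝ → (Fin n → ℝ) → (Fin n → ℝ))
    (x x' : ℝ → Fin n → ℝ)
    (hsol : ∀ t, t₀ ≤ t → HasDerivAt x (x' t) t ∧ E t (x t) *ᵥ x' t = F t (x t))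
    (V Vt : ℝ → (Fin n → ℝ) → ℝ) (z : ℝ → (Fin n → ℝ) → Fin n → ℝ)
    (hVC1 : ContDiff ℝ 1 (fun p : ℝ × (Fin n → ℝ) => V p.1 p.2))
    (hgrad : ∀ t ξ h, 0 ≤ t →
      HasDerivAt (fun s : ℝ => V t (ξ + s • h)) ((((E t ξ)ᵀ) *ᵥ z t ξ) ⬝ᵥ h) 0)
    (hVt : ∀ t ξ, 0 ≤ t → HasDerivAt (fun s => V s ξ) (Vt t ξ) t)
    (hdec : ∀ t ξ, 0 ≤ t → Vt t ξ + z t ξ ⬝ᵥ F t ξ ≤ 0)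
    (c₂ c₃ : ℝ) (hc₂ : 0 < c₂)
    (hlow : ∀ t ξ, 0 ≤ t → c₂ * (ξ ⬝ᵥ ξ) ≤ V t ξ)
    (hhigh : ∀ t ξ, 0 ≤ t → V t ξ ≤ c₃ * (ξ ⬝ᵥ ξ)) :
    (∀ s t : ℝ, t₀ ≤ s → s ≤ t → V t (x t) ≤ V s (x s)) ∧
      (∀ t, t₀ ≤ t → x t ⬝ᵥ x t ≤ (c₃ / c₂) * (x t₀ ⬝ᵥ x t₀)) := by
  have hderiv : ∀ t ∈ Ici t₀,
      HasDerivAt (fun s => V s (x s)) (Vt t (x t) + z t (x t) ⬝ᵥ F t (x t)) t := by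
    intro t ht
    obtain ⟨hx, hEF⟩ := hsol t ht
    have hV := (hVC1.differentiable one_ne_zero (t, x t)).hasFDerivAt
    have := hV.hasDerivAt_comp_prodMk_of_partials hx (hVt t (x t) (ht₀.trans ht))
      (hgrad t (x t) (x' t) (ht₀.trans ht))
    rwa [transpose_mulVec_dotProduct, hEF] at this
  have hanti : AntitoneOn (fun t => V t (x t)) (Ici t₀) :=
    antitoneOn_of_hasDerivAt_nonpos (convex_Ici t₀) hderiv
      (fun t ht => hdec t (x t) (ht₀.trans ht))
  refine ⟨fun s t hs hst => hanti hs (hs.trans hst) hst, fun t ht => ?_⟩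
  rw [div_mul_eq_mul_div, le_div_iff₀ hc₂]
  nlinarith [hlow t (x t) (ht₀.trans ht), hanti self_mem_Ici ht ht, hhigh t₀ (x t₀) ht₀]

theorem stmt5 {n : ℕ} (t₀ : ℝ) (ht₀ : 0 ≤ t₀)
    (E : ℝ → (Fin n → ℝ) → Matrix (Fin n) (Fin n) ℝ)
    (F : ℝ → (Fin n → ℝ) → (Fin n → ℝ))
    (hEcont : Continuous (fun p : ℝ × (Fin n → ℝ) => E p.1 p.2))
    (hFcont : Continuous (fun p : ℝ × (Fin n → ℝ) => F p.1 p.2))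
    (hEinv : ∀ t x, 0 ≤ t → IsUnit (E t x))
    (x x' : ℝ → Fin n → ℝ)
    (hsol : ∀ t, t₀ ≤ t → HasDerivAt x (x' t) t ∧ E t (x t) *ᵥ x' t = F t (x t))
    (V Vt : ℝ → (Fin n → ℝ) → ℝ) (z : ℝ → (Fin n → ℝ) → Fin n → ℝ)
    (hVC1 : ContDiff ℝ 1 (fun p : ℝ × (Fin n → ℝ) => V p.1 p.2))
    (hgrad : ∀ t ξ h, 0 ≤ t →
      HasDerivAt (fun s : ℝ => V t (ξ + s • h)) ((((E t ξ)ᵀ) *ᵥ z t ξ) ⬝ᵥ h) 0)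
    (hVt : ∀ t ξ, 0 ≤ t → HasDerivAt (fun s => V s ξ) (Vt t ξ) t)
    (hdec : ∀ t ξ, 0 ≤ t → Vt t ξ + z t ξ ⬝ᵥ F t ξ ≤ 0)
    (c₂ c₃ : ℝ) (hc₂ : 0 < c₂) (hc₃ : 0 < c₃)
    (hlow : ∀ t ξ, 0 ≤ t → c₂ * (ξ ⬝ᵥ ξ) ≤ V t ξ)
    (hhigh : ∀ t ξ, 0 ≤ t → V t ξ ≤ c₃ * (ξ ⬝ᵥ ξ)) :
    (∀ s t : ℝ, t₀ ≤ s → s ≤ t → V t (x t) ≤ V s (x s)) ∧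
      (∀ t, t₀ ≤ t → x t ⬝ᵥ x t ≤ (c₃ / c₂) * (x t₀ ⬝ᵥ x t₀)) :=
  stmt5_general t₀ ht₀ E F x x' hsol V Vt z hVC1 hgrad hVt hdec c₂ c₃ hc₂ hlow hhigh
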